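/- arXiv:2507.19336 — 2 statements merged into one kernel-verified Lean document; each statement's English description precedes it below -/
import Mathlib

section
/- Let m ≥ 4. Let A ⊆ {0,1}^m be the set of vectors with at most 2 transitions. Then |A| = 2·(C(m-1,0) + C(m-1,1) + C(m-1,2)) = 2·C(m,2) + 2, and A contains no 4×3 configuration equal (up to row and column permutation) to the matrix F_5 with columns (1,1,0,0), (1,0,1,0), (0,1,1,0): that is, there do not exist 4 positions i_1<i_2<i_3<i_4 and 3 distinct vectors in A whose restrictions to these positions are, up to permuting the 4 positions, the three columns of F_5. -/
/-- Number of transitions of a (0,1)-vector of length `m`. -/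
def transitions {m : ℕ} (v : Fin m → Bool) : ℕ :=
  (Finset.univ.filter (fun i : Fin m =>
    (if h : (i : ℕ) + 1 < m then v i != v ⟨(i : ℕ) + 1, h⟩ else false) = true)).card

/-- Number of ones of a (0,1)-vector. -/
def weight {m : ℕ} (v : Fin m → Bool) : ℕ :=
  (Finset.univ.filter (fun i : Fin m => v i = true)).card

/-!
A Boolean vector of length `n + 1` is determined by its first entry and its set of transition
positions, a subset of `Fin n`, and every such pair occurs; so the vectors with at most `k`
transitions correspond to two copies of the subsets of size at most `k`. Restricting a vector to
increasing positions cannot create transitions: each transition of the restriction lies over a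
transition of the vector, and distinct ones over distinct ones. Finally, in every ordering of the
four rows of `F₅` one of the three columns has three transitions.
-/

open Finset

lemma card_filter_card_le (α : Type*) [Fintype α] (k : ℕ) :
    #{S : Finset α | #S ≤ k} = ∑ i ∈ range (k + 1), (Fintype.card α).choose i := by
  classical
  rw [card_eq_sum_card_fiberwise (f := card) (t := range (k + 1))
    fun S hS => by simpa [Nat.lt_succ_iff] using hS]
  refine sum_congr rfl fun i hi => ?_
  rw [← card_univ, ← card_powersetCard, powersetCard_eq_filter, powerset_univ, filter_filter]
  refine congrArg card (filter_congr fun S _ => ?_)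
  simp only [mem_range] at hi
  omega

section TransitionSet

variable {α : Type*} [DecidableEq α] {n : ℕ}

def transitionSet (v : Fin (n + 1) → α) : Finset (Fin n) :=
  {i | v i.castSucc ≠ v i.succ}

lemma mem_transitionSet {v : Fin (n + 1) → α} {i : Fin n} :
    i ∈ transitionSet v ↔ v i.castSucc ≠ v i.succ := by
  simp [transitionSet]

lemma transitions_eq_card_transitionSet (v : Fin (n + 1) → Bool) :
    transitions v = #(transitionSet v) := by
  rw [transitions, ← card_map Fin.castSuccEmb (s := transitionSet v)]
  refine congrArg card (ext fun i => ?_)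
  simp only [mem_filter, mem_univ, true_and, mem_map, Fin.coe_castSuccEmb, mem_transitionSet]
  constructor
  · intro h
    have hi : (i : ℕ) + 1 < n + 1 := by by_contra hi; simp [hi] at h
    refine ⟨⟨i, by omega⟩, ?_, rfl⟩
    simpa [hi] using h
  · rintro ⟨j, hj, rfl⟩
    rw [dif_pos (by simp), bne_iff_ne]
    exact hj

lemma eq_of_transitionSet_eq {v w : Fin (n + 1) → Bool} (h₀ : v 0 = w 0)
    (h : transitionSet v = transitionSet w) : v = w := by
  funext i
  induction i using Fin.induction with
  | zero => exact h₀
  | succ i ih =>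
    have := congrArg (i ∈ ·) h
    simp only [mem_transitionSet, ih, eq_iff_iff] at this
    revert this
    cases v i.succ <;> cases w i.succ <;> cases w i.castSucc <;> simp

lemma bijective_zero_transitionSet :
    Function.Bijective fun v : Fin (n + 1) → Bool => (v 0, transitionSet v) := by
  rw [Fintype.bijective_iff_injective_and_card]
  refine ⟨fun v w h => eq_of_transitionSet_eq (congrArg Prod.fst h) (congrArg Prod.snd h), ?_⟩
  simp [Fintype.card_finset, pow_succ, mul_comm]

lemma card_filter_transitions_le (n k : ℕ) :
    #{v : Fin (n + 1) → Bool | transitions v ≤ k} = 2 * ∑ i ∈ range (k + 1), n.choose i := by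
  rw [card_bijective _ bijective_zero_transitionSet
      (t := (univ : Finset Bool) ×ˢ ({S : Finset (Fin n) | #S ≤ k} : Finset _))
      (by simp [transitions_eq_card_transitionSet]),
    card_product, card_filter_card_le, card_univ, Fintype.card_bool, Fintype.card_fin]

lemma exists_mem_transitionSet_of_ne {v : Fin (n + 1) → α} {a b : Fin (n + 1)} (hab : a ≤ b)
    (h : v a ≠ v b) : ∃ i ∈ transitionSet v, a ≤ i.castSucc ∧ i.succ ≤ b := by
  induction b using Fin.induction with
  | zero => exact absurd (congrArg v (le_antisymm hab (Fin.zero_le a))) h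
  | succ i ih =>
    rcases hab.lt_or_eq with hlt | rfl
    · have ha : a ≤ i.castSucc := Fin.le_castSucc_iff.2 hlt
      by_cases hai : v a = v i.castSucc
      · exact ⟨i, mem_transitionSet.2 (hai ▸ h), ha, le_rfl⟩
      · obtain ⟨j, hj, haj, hji⟩ := ih ha hai
        exact ⟨j, hj, haj, hji.trans (Fin.castSucc_le_succ i)⟩
    · exact absurd rfl h

lemma card_transitionSet_comp_le {k : ℕ} (v : Fin (n + 1) → α) {g : Fin (k + 1) → Fin (n + 1)}
    (hg : Monotone g) : #(transitionSet (v ∘ g)) ≤ #(transitionSet v) := by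
  have key (j : Fin k) (hj : j ∈ transitionSet (v ∘ g)) :
      ∃ i ∈ transitionSet v, g j.castSucc ≤ i.castSucc ∧ i.succ ≤ g j.succ :=
    exists_mem_transitionSet_of_ne (hg (Fin.castSucc_le_succ j)) (mem_transitionSet.1 hj)
  obtain hS | ⟨j₀, hj₀⟩ := (transitionSet (v ∘ g)).eq_empty_or_nonempty
  · simp [hS]
  have : Nonempty (Fin n) := ⟨(key j₀ hj₀).choose⟩
  choose! φ hφ hφ_lo hφ_hi using key
  refine card_le_card_of_injOn φ hφ (StrictMonoOn.injOn fun j hj j' hj' hjj' => ?_)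
  refine Fin.succ_le_castSucc_iff.1 ?_
  calc (φ j).succ ≤ g j.succ := hφ_hi j hj
    _ ≤ g j'.castSucc := hg (Fin.succ_le_castSucc_iff.2 hjj')
    _ ≤ (φ j').castSucc := hφ_lo j' hj'

end TransitionSet

lemma transitions_comp_le {n k : ℕ} (v : Fin (n + 1) → Bool) {g : Fin (k + 1) → Fin (n + 1)}
    (hg : Monotone g) : transitions (v ∘ g) ≤ transitions v := by
  simpa only [transitions_eq_card_transitionSet] using card_transitionSet_comp_le v hg

-- A column with two ones and two zeros has three transitions exactly when it alternates.
lemma F5_columns_two_lt_transitions : ∀ σ : Equiv.Perm (Fin 4),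
    2 < transitions (![true, true, false, false] ∘ σ) ∨
    2 < transitions (![true, false, true, false] ∘ σ) ∨
    2 < transitions (![false, true, true, false] ∘ σ) := by decide

/-- for m ≥ 4, the set A of vectors in {0,1}^m with at most 2 transitions
has size 2(C(m-1,0)+C(m-1,1)+C(m-1,2)) = 2·C(m,2)+2, and contains no configuration F₅. -/
theorem stmt_12 (m : ℕ) (hm : 4 ≤ m) :
    (Finset.univ.filter (fun v : Fin m → Bool => transitions v ≤ 2)).card
        = 2 * ((m - 1).choose 0 + (m - 1).choose 1 + (m - 1).choose 2) ∧
    2 * ((m - 1).choose 0 + (m - 1).choose 1 + (m - 1).choose 2) = 2 * m.choose 2 + 2 ∧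
    ¬ ∃ g : Fin 4 → Fin m, StrictMono g ∧ ∃ σ : Equiv.Perm (Fin 4),
      ∃ v₁ v₂ v₃ : Fin m → Bool,
        transitions v₁ ≤ 2 ∧ transitions v₂ ≤ 2 ∧ transitions v₃ ≤ 2 ∧
        v₁ ≠ v₂ ∧ v₁ ≠ v₃ ∧ v₂ ≠ v₃ ∧
        (∀ j : Fin 4, v₁ (g (σ j)) = ![true, true, false, false] j) ∧
        (∀ j : Fin 4, v₂ (g (σ j)) = ![true, false, true, false] j) ∧
        (∀ j : Fin 4, v₃ (g (σ j)) = ![false, true, true, false] j) := by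
  obtain ⟨n, rfl⟩ : ∃ n, m = n + 1 := ⟨m - 1, by omega⟩
  refine ⟨?_, ?_, ?_⟩
  · simpa [sum_range_succ] using card_filter_transitions_le n 2
  · simp only [Nat.add_sub_cancel, Nat.choose_succ_succ', Nat.choose_zero_right]
    ring
  · rintro ⟨g, hg, σ, v₁, v₂, v₃, h₁, h₂, h₃, -, -, -, e₁, e₂, e₃⟩
    have column (v : Fin (n + 1) → Bool) (c : Fin 4 → Bool) (hv : transitions v ≤ 2)
        (hvc : ∀ j, v (g (σ j)) = c j) : transitions (c ∘ σ.symm) ≤ 2 := by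
      have : v ∘ g = c ∘ σ.symm := funext fun i => by simpa using hvc (σ.symm i)
      exact this ▸ (transitions_comp_le v hg.monotone).trans hv
    have := column v₁ _ h₁ e₁
    have := column v₂ _ h₂ e₂
    have := column v₃ _ h₃ e₃
    have := F5_columns_two_lt_transitions σ.symm
    omega
end

section
/- Let m ≥ 2 and k ≥ 3. Let A be the m-rowed (0,1)-matrix whose columns are all vectors of weight at most k-2 together with the codewords of a binary constant-weight code of length m, weight k-1, and minimum Hamming distance 4. Then A is simple (no repeated columns) and no two distinct columns of A both have k-1 ones with their supports intersecting in k-2 common positions; equivalently, A avoids the configuration I_2 × 1_{k-2} (the (k)×2 matrix [[1,0],[0,1],[1,1],...,[1,1]] with k-2 rows of (1,1) below I_2). -/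
/-!
A column of the matrix with `k - 1` ones must be a codeword. Two distinct codewords `u`, `v`
of weight `k - 1` satisfy `hammingDist u v + 2 |supp u ∩ supp v| = 2 (k - 1)`, so distance
`≥ 4` forces `|supp u ∩ supp v| ≤ k - 3`. An occurrence of `I₂ × 1_{k-2}` would give two
columns with at least `k - 2` common ones, each with a one outside the common support,
hence two distinct codewords with at least `k - 2` common ones.
-/

open Finset

theorem Fin.card_filter_le_val (n m : ℕ) : #{i : Fin n | m ≤ (i : ℕ)} = n - m := by
  have h := card_filter_add_card_filter_not (s := univ) (fun i : Fin n => (i : ℕ) < m)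
  simp only [card_filter_val_lt, not_lt, card_univ, Fintype.card_fin] at h
  omega

section
variable {m : ℕ}

theorem hammingDist_add_two_mul_card_filter_and (u v : Fin m → Bool) :
    hammingDist u v + 2 * #{i | u i = true ∧ v i = true} = weight u + weight v := by
  simp only [hammingDist, weight, card_filter, mul_sum, ← sum_add_distrib]
  refine sum_congr rfl fun i _ => ?_
  cases u i <;> cases v i <;> rfl

theorem card_filter_and_add_two_le_of_four_le_hammingDist {u v : Fin m → Bool} {w : ℕ}
    (hu : weight u = w) (hv : weight v = w) (hd : 4 ≤ hammingDist u v) :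
    #{i | u i = true ∧ v i = true} + 2 ≤ w := by
  have := hammingDist_add_two_mul_card_filter_and u v
  omega

theorem card_filter_and_lt_weight {u v : Fin m → Bool} {i : Fin m} (hu : u i = true)
    (hv : v i = false) : #{i | u i = true ∧ v i = true} < weight u := by
  refine card_lt_card ((ssubset_iff_of_subset ?_).2 ⟨i, by simp [hu], by simp [hv]⟩)
  exact monotone_filter_right _ fun _ _ h => h.1

theorem sub_two_le_card_filter_and {k : ℕ} {f : Fin k → Fin m} (hf : Function.Injective f)
    {u v : Fin m → Bool} (h : ∀ j : Fin k, 2 ≤ (j : ℕ) → u (f j) = true ∧ v (f j) = true) :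
    k - 2 ≤ #{i | u i = true ∧ v i = true} := by
  rw [← Fin.card_filter_le_val k 2]
  refine card_le_card_of_injOn f (fun j hj => ?_) hf.injOn
  simpa using h j (mem_filter.1 hj).2

end

/-- with A the union of all columns of weight ≤ k-2 with a constant-weight
code C of weight k-1 and minimum distance 4, A is simple (the union is disjoint), no two
distinct weight-(k-1) columns of A share k-2 common ones, and A avoids I₂ × 1_{k-2}. -/
theorem stmt_14 (m k : ℕ) (hk : 3 ≤ k) (C : Finset (Fin m → Bool))
    (hCw : ∀ c ∈ C, weight c = k - 1)
    (hCd : ∀ c ∈ C, ∀ d ∈ C, c ≠ d →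
      4 ≤ (Finset.univ.filter (fun i => c i ≠ d i)).card) :
    ((Finset.univ.filter (fun v : Fin m → Bool => weight v ≤ k - 2)) ∪ C).card
        = (Finset.univ.filter (fun v : Fin m → Bool => weight v ≤ k - 2)).card + C.card ∧
    (∀ u ∈ (Finset.univ.filter (fun v : Fin m → Bool => weight v ≤ k - 2)) ∪ C,
      ∀ v ∈ (Finset.univ.filter (fun v : Fin m → Bool => weight v ≤ k - 2)) ∪ C,
        u ≠ v → weight u = k - 1 → weight v = k - 1 →
          (Finset.univ.filter (fun i => u i = true ∧ v i = true)).card ≠ k - 2) ∧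
    ¬ ∃ f : Fin k → Fin m, Function.Injective f ∧
      ∃ u ∈ (Finset.univ.filter (fun v : Fin m → Bool => weight v ≤ k - 2)) ∪ C,
        ∃ v ∈ (Finset.univ.filter (fun v : Fin m → Bool => weight v ≤ k - 2)) ∪ C,
          u ≠ v ∧
          u (f ⟨0, by omega⟩) = true ∧ v (f ⟨0, by omega⟩) = false ∧
          u (f ⟨1, by omega⟩) = false ∧ v (f ⟨1, by omega⟩) = true ∧
          ∀ j : Fin k, 2 ≤ (j : ℕ) → u (f j) = true ∧ v (f j) = true := by
  have mem_C : ∀ u ∈ ({v | weight v ≤ k - 2} : Finset (Fin m → Bool)) ∪ C,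
      k - 2 < weight u → u ∈ C := by
    intro u hu hw
    rcases mem_union.1 hu with hu | hu
    · exact absurd (mem_filter.1 hu).2 (by omega)
    · exact hu
  have few_common : ∀ u ∈ C, ∀ v ∈ C, u ≠ v → #{i | u i = true ∧ v i = true} + 2 ≤ k - 1 :=
    fun u hu v hv huv =>
      card_filter_and_add_two_le_of_four_le_hammingDist (hCw u hu) (hCw v hv) (hCd u hu v hv huv)
  refine ⟨card_union_of_disjoint (disjoint_left.2 fun u hu huC => ?_), ?_, ?_⟩
  · have := (mem_filter.1 hu).2
    have := hCw u huC
    omega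
  · intro u hu v hv huv hwu hwv
    have := few_common u (mem_C u hu (by omega)) v (mem_C v hv (by omega)) huv
    omega
  · rintro ⟨f, hf, u, hu, v, hv, huv, hu0, hv0, hu1, hv1, hj⟩
    have common := sub_two_le_card_filter_and hf hj
    have hwu := card_filter_and_lt_weight hu0 hv0
    have hwv : #{i | u i = true ∧ v i = true} < weight v := by
      simpa only [and_comm] using card_filter_and_lt_weight hv1 hu1
    have := few_common u (mem_C u hu (by omega)) v (mem_C v hv (by omega)) huv
    omega
end
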